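/- arXiv:math/0408079 — 2 statements merged into one kernel-verified Lean document; each statement's English description precedes it below -/
import Mathlib

section
/- For every a ∈ (0,1/2) and every (x,y) ∈ Ω_a, writing γ_{x,a}(y) = F_a(x,y) and γ′_{x,a}(y) = ∂_y F_a(x,y), one has ⟨γ′_{x,a}(y), γ′_{x,a}(0)⟩ = cosh(v_a(x,y)) · cos(u_a(x,y) − u_a(x,0)) > cosh(v_a(x,y))/2 > 0, where u_a = Re h_a and v_a = Im h_a. -/
open Complex Real Set Finset Filter RealInnerProductSpace

/-- Points of `ℝ³` as `EuclideanSpace`. -/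
noncomputable def vec3 (a b c : ℝ) : EuclideanSpace ℝ (Fin 3) := WithLp.toLp 2 ![a, b, c]

/-- `h_a(z) = Σ_{j<n} (1/(2^j a)) arctan((z - b j)/a)` (indices shifted to start at 0),
using the principal branch of the complex arctangent. -/
noncomputable def hFun (n : ℕ) (b : ℕ → ℝ) (a : ℝ) (z : ℂ) : ℂ :=
  ∑ j ∈ Finset.range n, (1 / ((2 : ℂ) ^ j * (a : ℂ))) * Complex.arctan ((z - (b j : ℂ)) / (a : ℂ))

/-- Left endpoint of the x-range of `Ω_{a,j}`. -/
noncomputable def leftEnd (b : ℕ → ℝ) (j : ℕ) : ℝ :=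
  if j = 0 then -(1/2) else (b (j - 1) + b j) / 2

/-- Right endpoint of the x-range of `Ω_{a,j}`. -/
noncomputable def rightEnd (n : ℕ) (b : ℕ → ℝ) (j : ℕ) : ℝ :=
  if j = n - 1 then 1/2 else (b j + b (j + 1)) / 2

/-- The domain `Ω_{a,j}` (indices shifted to start at 0). -/
def OmegaJ (n : ℕ) (b : ℕ → ℝ) (a : ℝ) (j : ℕ) : Set ℂ :=
  {z : ℂ | leftEnd b j ≤ z.re ∧ z.re ≤ rightEnd n b j ∧
    |z.im| ≤ ((z.re - b j) ^ 2 + a ^ 2) ^ ((3 : ℝ)/4) / 2}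

/-- The domain `Ω_a = ⋃_j Ω_{a,j}`. -/
def OmegaA (n : ℕ) (b : ℕ → ℝ) (a : ℝ) : Set ℂ := ⋃ j ∈ Finset.range n, OmegaJ n b a j

/-!
Along a vertical line the `y`-derivative of `Re G(x + iy)` is `Re (G' · i)`. For the
Weierstrass data `G₁' = -i sin h`, `G₂' = i cos h`, `G₃' = 1` this is
`cosh v · (sin u, -cos u, 0)`, and `v(x, 0) = 0`, so the inner product equals
`cosh v(x,y) · cos (u(x,y) - u(x,0))`. It remains to see `|u(x,y) - u(x,0)| < 1`.

Now `∂_y u = -Im h'` with `h'(z) = Σⱼ 2⁻ʲ / ((z - bⱼ)² + a²)`. Write `Rⱼ = (x - bⱼ)² + a²`.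
A point of `Ω_{a,i}` is closest to `bᵢ`, so `|y| ≤ Rᵢ^{3/4}/2 ≤ Rⱼ^{3/4}/2`, and `Rⱼ ≤ 5/4` gives
`y² ≤ (9/32) Rⱼ` and `|x - bⱼ| y² ≤ Rⱼ²/4`. The first bound keeps `Re ((z - bⱼ)² + a²) ≥ (23/32) Rⱼ`
on the segment, so `|∂_y u(x,t)| ≤ C |t|`, and integrating, the second bound gives
`|u(x,y) - u(x,0)| ≤ Σⱼ 2⁻ʲ · 256/529 ≤ 512/529`.
-/

theorem Complex.one_add_mul_I_div_one_sub_mul_I_mem_slitPlane {z : ℂ}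
    (hz : z.re ≠ 0 ∨ normSq z < 1) : (1 + z * I) / (1 - z * I) ∈ slitPlane := by
  have hD : 0 < normSq (1 - z * I) := by
    refine normSq_pos.mpr fun h => ?_
    have hzI : z = -I := by linear_combination I * h + z * I_sq
    simp [hzI] at hz
  rw [mem_slitPlane_iff, div_re, div_im]
  simp only [add_re, add_im, sub_re, sub_im, mul_re, mul_im, one_re, one_im, I_re, I_im]
  rcases hz with hre | hnorm
  · right
    rw [← sub_div]
    refine div_ne_zero ?_ hD.ne'
    ring_nf
    simpa using hre
  · left
    rw [← add_div]
    refine div_pos ?_ hD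
    rw [normSq_apply] at hnorm
    nlinarith

theorem Complex.one_add_mul_I_mul_one_sub_mul_I (z : ℂ) :
    (1 + z * I) * (1 - z * I) = 1 + z ^ 2 := by
  ring_nf
  simp [I_sq]

theorem Complex.one_add_sq_ne_zero_of_mem_slitPlane {z : ℂ}
    (hz : (1 + z * I) / (1 - z * I) ∈ slitPlane) : 1 + z ^ 2 ≠ 0 := by
  obtain ⟨hN, hD⟩ := div_ne_zero_iff.mp (slitPlane_ne_zero hz)
  rw [← one_add_mul_I_mul_one_sub_mul_I]
  exact mul_ne_zero hN hD

theorem Complex.hasDerivAt_arctan {z : ℂ} (hz : (1 + z * I) / (1 - z * I) ∈ slitPlane) :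
    HasDerivAt arctan (1 / (1 + z ^ 2)) z := by
  obtain ⟨hN, hD⟩ := div_ne_zero_iff.mp (slitPlane_ne_zero hz)
  have hdiv : HasDerivAt (fun w : ℂ => (1 + w * I) / (1 - w * I))
      ((I * (1 - z * I) - (1 + z * I) * (-I)) / (1 - z * I) ^ 2) z := by
    refine HasDerivAt.div ?_ ?_ hD
    · simpa using ((hasDerivAt_id z).mul_const I).const_add 1
    · simpa using ((hasDerivAt_id z).mul_const I).const_sub 1
  refine (((hasDerivAt_log hz).comp z hdiv).const_mul (-I / 2)).congr_deriv ?_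
  rw [← one_add_mul_I_mul_one_sub_mul_I]
  field_simp
  ring_nf
  simp only [I_sq]
  ring

theorem Complex.sin_re (z : ℂ) : (sin z).re = Real.sin z.re * Real.cosh z.im := by
  rw [sin_eq]
  simp [← ofReal_sin, ← ofReal_cos, ← ofReal_cosh, ← ofReal_sinh]

theorem Complex.cos_re (z : ℂ) : (cos z).re = Real.cos z.re * Real.cosh z.im := by
  rw [cos_eq]
  simp [← ofReal_sin, ← ofReal_cos, ← ofReal_cosh, ← ofReal_sinh]

theorem half_mul_exp_sub_mul_I (w : ℂ) :
    1 / 2 * (exp (-I * w) - exp (I * w)) * I = sin w := by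
  rw [Complex.sin]
  ring_nf

theorem I_div_two_mul_exp_add_mul_I (w : ℂ) :
    I / 2 * (exp (-I * w) + exp (I * w)) * I = -cos w := by
  rw [Complex.cos]
  ring_nf
  rw [I_sq]
  ring

theorem HasDerivAt.re_comp_vertical {G : ℂ → ℂ} {G' : ℂ} {x t : ℝ}
    (h : HasDerivAt G G' (x + t * I)) :
    HasDerivAt (fun s : ℝ => (G (x + s * I)).re) (G' * I).re t := by
  have hline : HasDerivAt (fun w : ℂ => x + w * I) I t := by
    simpa using ((hasDerivAt_id (t : ℂ)).mul_const I).const_add (x : ℂ)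
  exact (h.comp (t : ℂ) hline).real_of_complex

section

variable {E : Type*} [NormedAddCommGroup E] [NormedSpace ℝ E]

theorem norm_sub_le_of_norm_deriv_le_mul_of_nonneg {f f' : ℝ → E} {C y : ℝ} (hy : 0 ≤ y)
    (hf : ∀ t ∈ Icc 0 y, HasDerivAt f (f' t) t) (bound : ∀ t ∈ Icc 0 y, ‖f' t‖ ≤ C * t) :
    ‖f y - f 0‖ ≤ C * y ^ 2 / 2 := by
  have hB : ∀ t, HasDerivAt (fun s : ℝ => C * s ^ 2 / 2) (C * t) t := fun t =>
    (((hasDerivAt_pow 2 t).const_mul C).div_const 2).congr_deriv (by push_cast; ring)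
  refine image_norm_le_of_norm_deriv_right_le_deriv_boundary (f := fun t => f t - f 0)
    (fun t ht => ((hf t ht).sub_const (f 0)).continuousAt.continuousWithinAt)
    (fun t ht => ((hf t (Ico_subset_Icc_self ht)).sub_const (f 0)).hasDerivWithinAt)
    (by simp) hB (fun t ht => bound t (Ico_subset_Icc_self ht)) ⟨hy, le_rfl⟩

theorem norm_sub_le_of_norm_deriv_le_mul_abs {f f' : ℝ → E} {C y : ℝ}
    (hf : ∀ t ∈ uIcc 0 y, HasDerivAt f (f' t) t) (bound : ∀ t ∈ uIcc 0 y, ‖f' t‖ ≤ C * |t|) :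
    ‖f y - f 0‖ ≤ C * y ^ 2 / 2 := by
  rcases le_total 0 y with hy | hy
  · rw [uIcc_of_le hy] at hf bound
    exact norm_sub_le_of_norm_deriv_le_mul_of_nonneg hy hf
      fun t ht => (bound t ht).trans_eq (by rw [abs_of_nonneg ht.1])
  · rw [uIcc_of_ge hy] at hf bound
    have hmem : ∀ t ∈ Icc 0 (-y), -t ∈ Icc y 0 := fun t ht =>
      ⟨by linarith [ht.2], by linarith [ht.1]⟩
    have hneg : ∀ t ∈ Icc 0 (-y), HasDerivAt (f ∘ Neg.neg) (-f' (-t)) t := fun t ht => by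
      simpa using (hf _ (hmem t ht)).scomp t (hasDerivAt_neg t)
    simpa using norm_sub_le_of_norm_deriv_le_mul_of_nonneg (neg_nonneg.mpr hy) hneg
      fun t ht => by simpa [abs_of_nonneg ht.1] using bound _ (hmem t ht)

end

theorem Real.one_half_lt_cos_of_abs_lt_one {θ : ℝ} (hθ : |θ| < 1) : 1 / 2 < Real.cos θ := by
  nlinarith [one_sub_sq_div_two_le_cos (x := θ), sq_abs θ, abs_nonneg θ]

theorem abs_im_inv_sq_add_sq_le {w : ℂ} {a κ : ℝ} (ha : a ≠ 0) (hκ : κ < 1)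
    (hw : w.im ^ 2 ≤ κ * (w.re ^ 2 + a ^ 2)) :
    |((w ^ 2 + (a : ℂ) ^ 2)⁻¹).im|
      ≤ 2 * |w.re| * |w.im| / ((1 - κ) ^ 2 * (w.re ^ 2 + a ^ 2) ^ 2) := by
  set d := w ^ 2 + (a : ℂ) ^ 2
  have hre : d.re = w.re ^ 2 - w.im ^ 2 + a ^ 2 := by simp [d, sq]
  have him : d.im = 2 * w.re * w.im := by simp [d, sq]; ring
  have hR : 0 < (1 - κ) * (w.re ^ 2 + a ^ 2) := by
    have : 0 < a ^ 2 := by positivity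
    nlinarith [sq_nonneg w.re]
  have hlow : (1 - κ) * (w.re ^ 2 + a ^ 2) ≤ d.re := by rw [hre]; linarith
  have hns : ((1 - κ) * (w.re ^ 2 + a ^ 2)) ^ 2 ≤ normSq d := by
    rw [normSq_apply]
    nlinarith [mul_self_nonneg d.im]
  rw [inv_im, neg_div, abs_neg, abs_div, abs_of_pos ((pow_pos hR 2).trans_le hns), him,
    abs_mul, abs_mul, abs_two]
  calc 2 * |w.re| * |w.im| / normSq d
      ≤ 2 * |w.re| * |w.im| / ((1 - κ) * (w.re ^ 2 + a ^ 2)) ^ 2 :=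
        div_le_div_of_nonneg_left (by positivity) (by positivity) hns
    _ = _ := by ring

theorem sq_le_and_abs_mul_sq_le {s a y R₀ : ℝ} (hR₀ : 0 ≤ R₀) (hR₀le : R₀ ≤ s ^ 2 + a ^ 2)
    (hle : s ^ 2 + a ^ 2 ≤ 81 / 64) (hy : |y| ≤ R₀ ^ (3 / 4 : ℝ) / 2) :
    y ^ 2 ≤ 9 / 32 * (s ^ 2 + a ^ 2) ∧ |s| * y ^ 2 ≤ (s ^ 2 + a ^ 2) ^ 2 / 4 := by
  set R := s ^ 2 + a ^ 2
  have hR : 0 ≤ R := hR₀.trans hR₀le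
  have hpow : (R ^ (3 / 4 : ℝ)) ^ 2 = R * √R := by
    rw [← rpow_natCast, ← rpow_mul hR, sqrt_eq_rpow, ← rpow_one_add' hR (by norm_num)]
    norm_num
  have hy2 : y ^ 2 ≤ R * √R / 4 :=
    calc y ^ 2 = |y| ^ 2 := (sq_abs y).symm
      _ ≤ (R ^ (3 / 4 : ℝ) / 2) ^ 2 := by gcongr; exact hy.trans (by gcongr)
      _ = R * √R / 4 := by rw [div_pow, hpow]; ring
  have hsqrt : √R ≤ 9 / 8 := (sqrt_le_left (by norm_num)).mpr (by linarith)
  have hs : |s| ≤ √R := by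
    rw [← sqrt_sq_eq_abs]
    exact sqrt_le_sqrt (by nlinarith [sq_nonneg a])
  constructor
  · nlinarith
  · calc |s| * y ^ 2 ≤ √R * (R * √R / 4) := by gcongr
      _ = R ^ 2 / 4 := by linear_combination R / 4 * sq_sqrt hR

theorem hasDerivAt_vec3 {f₁ f₂ f₃ : ℝ → ℝ} {d₁ d₂ d₃ t : ℝ}
    (h₁ : HasDerivAt f₁ d₁ t) (h₂ : HasDerivAt f₂ d₂ t) (h₃ : HasDerivAt f₃ d₃ t) :
    HasDerivAt (fun s => vec3 (f₁ s) (f₂ s) (f₃ s)) (vec3 d₁ d₂ d₃) t := by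
  have hpi : HasDerivAt (fun s => ![f₁ s, f₂ s, f₃ s]) ![d₁, d₂, d₃] t := by
    rw [hasDerivAt_pi]
    intro i
    fin_cases i <;> assumption
  exact (PiLp.continuousLinearEquiv 2 ℝ (fun _ : Fin 3 => ℝ)).symm.hasFDerivAt.comp_hasDerivAt t hpi

theorem inner_vec3 (p q r p' q' r' : ℝ) :
    ⟪vec3 p q r, vec3 p' q' r'⟫ = p * p' + q * q' + r * r' := by
  simp [vec3, PiLp.inner_apply, Fin.sum_univ_three, mul_comm]

noncomputable def hFunDeriv (n : ℕ) (b : ℕ → ℝ) (a : ℝ) (z : ℂ) : ℂ :=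
  ∑ j ∈ Finset.range n, (((1 / 2) ^ j : ℝ) : ℂ) * ((z - b j) ^ 2 + (a : ℂ) ^ 2)⁻¹

theorem hasDerivAt_hFun {n : ℕ} {b : ℕ → ℝ} {a : ℝ} (ha : a ≠ 0) {z : ℂ}
    (hz : ∀ j < n, z.re ≠ b j ∨ normSq (z - b j) < a ^ 2) :
    HasDerivAt (hFun n b a) (hFunDeriv n b a z) z := by
  refine HasDerivAt.fun_sum fun j hj => ?_
  have haC : (a : ℂ) ≠ 0 := ofReal_ne_zero.mpr ha
  have hw : ((z - b j) / a).re ≠ 0 ∨ normSq ((z - b j) / a) < 1 := by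
    rcases hz j (Finset.mem_range.mp hj) with h | h
    · left
      simpa [div_ofReal_re, sub_eq_zero] using And.intro h ha
    · right
      rw [normSq_div, normSq_ofReal, div_lt_one (mul_self_pos.mpr ha)]
      simpa [sq] using h
  have hslit := one_add_mul_I_div_one_sub_mul_I_mem_slitPlane hw
  have hne := one_add_sq_ne_zero_of_mem_slitPlane hslit
  have hinner : HasDerivAt (fun w : ℂ => (w - b j) / a) (1 / a) z := by
    simpa using ((hasDerivAt_id z).sub_const (b j : ℂ)).div_const (a : ℂ)
  refine (((hasDerivAt_arctan hslit).comp z hinner).const_mul _).congr_deriv ?_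
  have hden : (z - b j) ^ 2 + (a : ℂ) ^ 2 ≠ 0 := by
    convert mul_ne_zero (pow_ne_zero 2 haC) hne using 1
    field_simp
    ring
  rw [show (1 : ℂ) + ((z - b j) / a) ^ 2 = ((z - b j) ^ 2 + a ^ 2) / a ^ 2 by field_simp; ring]
  push_cast
  rw [one_div_pow]
  field_simp

theorem hFun_ofReal_im (n : ℕ) (b : ℕ → ℝ) (a x : ℝ) : (hFun n b a x).im = 0 := by
  simp only [hFun, im_sum]
  refine Finset.sum_eq_zero fun j _ => ?_
  rw [show 1 / ((2 : ℂ) ^ j * a) * Complex.arctan ((x - b j) / a)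
      = ((1 / (2 ^ j * a) * Real.arctan ((x - b j) / a) : ℝ) : ℂ) by push_cast; rfl]
  exact ofReal_im _

theorem abs_im_hFunDeriv_le {n : ℕ} {b : ℕ → ℝ} {a κ : ℝ} (ha : a ≠ 0) (hκ : κ < 1) {z : ℂ}
    (hz : ∀ j < n, z.im ^ 2 ≤ κ * ((z.re - b j) ^ 2 + a ^ 2)) :
    |(hFunDeriv n b a z).im| ≤ (∑ j ∈ Finset.range n, (1 / 2) ^ j *
      (2 * |z.re - b j| / ((1 - κ) ^ 2 * ((z.re - b j) ^ 2 + a ^ 2) ^ 2))) * |z.im| := by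
  simp only [hFunDeriv, im_sum, im_ofReal_mul, Finset.sum_mul]
  refine (Finset.abs_sum_le_sum_abs _ _).trans (Finset.sum_le_sum fun j hj => ?_)
  have hterm := abs_im_inv_sq_add_sq_le (w := z - b j) ha hκ
    (by simpa using hz j (Finset.mem_range.mp hj))
  simp only [sub_re, sub_im, ofReal_re, ofReal_im, sub_zero] at hterm
  rw [abs_mul, abs_of_pos (by positivity), mul_assoc]
  gcongr
  exact hterm.trans_eq (by ring)

theorem hasDerivAt_hFun_of_im_sq_le {n : ℕ} {b : ℕ → ℝ} {a κ : ℝ} (ha : a ≠ 0) (hκ : κ < 1)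
    {z : ℂ} (hz : ∀ j < n, z.im ^ 2 ≤ κ * ((z.re - b j) ^ 2 + a ^ 2)) :
    HasDerivAt (hFun n b a) (hFunDeriv n b a z) z := by
  refine hasDerivAt_hFun ha fun j hj => (ne_or_eq z.re (b j)).imp_right fun hre => ?_
  have hzj := hz j hj
  rw [hre, sub_self] at hzj
  rw [normSq_apply]
  simp only [sub_re, sub_im, ofReal_re, ofReal_im, hre, sub_self, sub_zero]
  nlinarith [sq_pos_of_ne_zero ha]

theorem sum_half_pow_mul_div_mul_sq_le {n : ℕ} {s R : ℕ → ℝ} {y : ℝ}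
    (hR : ∀ j < n, 0 < R j) (hy : ∀ j < n, |s j| * y ^ 2 ≤ R j ^ 2 / 4) :
    (∑ j ∈ Finset.range n, (1 / 2) ^ j * (2 * |s j| / ((1 - 9 / 32) ^ 2 * R j ^ 2))) * y ^ 2 / 2
      ≤ 512 / 529 :=
  calc _ = ∑ j ∈ Finset.range n, (1 / 2) ^ j * (1024 / 529 * (|s j| * y ^ 2) / R j ^ 2) := by
        rw [Finset.sum_mul, Finset.sum_div]
        refine Finset.sum_congr rfl fun j _ => ?_
        field_simp
        ring
    _ ≤ ∑ j ∈ Finset.range n, (1 / 2) ^ j * (256 / 529) := by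
        gcongr ∑ _ ∈ _, (1 / 2) ^ _ * ?_ with j hj
        rw [div_le_iff₀ (pow_pos (hR j (Finset.mem_range.mp hj)) 2)]
        linarith [hy j (Finset.mem_range.mp hj)]
    _ ≤ 512 / 529 := by
        rw [← Finset.sum_mul]
        linarith [sum_geometric_two_le n]

section OmegaGeometry

variable {n : ℕ} {b : ℕ → ℝ} {a : ℝ} {i : ℕ} {z : ℂ}

theorem abs_re_sub_le_of_mem_OmegaJ (hb : MonotoneOn b (Set.Iio n)) (hz : z ∈ OmegaJ n b a i)
    (hi : i < n) {j : ℕ} (hj : j < n) : |z.re - b i| ≤ |z.re - b j| := by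
  obtain ⟨hL, hR, -⟩ := hz
  have hbi : ∀ {k l}, k ≤ l → l < n → b k ≤ b l := fun hkl hl =>
    hb (show _ < n by omega) hl hkl
  rcases lt_trichotomy j i with hji | rfl | hij
  · rw [leftEnd, if_neg (by omega)] at hL
    have h1 := hbi (show j ≤ i - 1 by omega) (by omega)
    have h2 := hbi hji.le hi
    rw [abs_of_nonneg (by linarith : 0 ≤ z.re - b j)]
    exact abs_le.mpr ⟨by linarith, by linarith⟩
  · exact le_rfl
  · rw [rightEnd, if_neg (by omega)] at hR
    have h1 := hbi (show i + 1 ≤ j by omega) hj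
    have h2 := hbi hij.le hj
    rw [abs_of_nonpos (by linarith : z.re - b j ≤ 0)]
    exact abs_le.mpr ⟨by linarith, by linarith⟩

theorem abs_re_le_of_mem_OmegaJ (hb : ∀ j < n, |b j| < 1 / 2) (hz : z ∈ OmegaJ n b a i)
    (hi : i < n) : |z.re| ≤ 1 / 2 := by
  obtain ⟨hL, hR, -⟩ := hz
  have hbi := abs_lt.mp (hb i hi)
  refine abs_le.mpr ⟨hL.trans' ?_, hR.trans ?_⟩
  · unfold leftEnd
    split_ifs
    · exact le_rfl
    · linarith [(abs_lt.mp (hb (i - 1) (by omega))).1]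
  · unfold rightEnd
    split_ifs
    · exact le_rfl
    · linarith [(abs_lt.mp (hb (i + 1) (by omega))).2]

theorem im_sq_le_and_abs_mul_im_sq_le_of_mem_OmegaA (hb : MonotoneOn b (Set.Iio n))
    (hb' : ∀ j < n, |b j| < 1 / 2) (ha : |a| ≤ 1 / 2)
    (hz : z ∈ OmegaA n b a) {j : ℕ} (hj : j < n) :
    z.im ^ 2 ≤ 9 / 32 * ((z.re - b j) ^ 2 + a ^ 2) ∧
      |z.re - b j| * z.im ^ 2 ≤ ((z.re - b j) ^ 2 + a ^ 2) ^ 2 / 4 := by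
  obtain ⟨i, hi, hzi⟩ := mem_iUnion₂.mp hz
  rw [Finset.mem_range] at hi
  refine sq_le_and_abs_mul_sq_le (by positivity) ?_ ?_ hzi.2.2
  · gcongr ?_ + _
    exact sq_le_sq.mpr (abs_re_sub_le_of_mem_OmegaJ hb hzi hi hj)
  · have hx : |z.re - b j| ≤ 1 :=
      (abs_sub _ _).trans (by linarith [abs_re_le_of_mem_OmegaJ hb' hzi hi, hb' j hj])
    have ha2 : a ^ 2 ≤ 1 / 4 := by nlinarith [sq_abs a, abs_nonneg a]
    nlinarith [sq_abs (z.re - b j), abs_nonneg (z.re - b j)]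

theorem ofReal_re_mem_OmegaA (hz : z ∈ OmegaA n b a) :
    (z.re : ℂ) ∈ OmegaA n b a := by
  simp only [OmegaA, mem_iUnion₂] at hz ⊢
  obtain ⟨i, hi, hL, hR, -⟩ := hz
  refine ⟨i, hi, by simpa using hL, by simpa using hR, ?_⟩
  simp only [ofReal_im, abs_zero]
  positivity

end OmegaGeometry

theorem abs_re_hFun_sub_re_hFun_ofReal_re_le {n : ℕ} {b : ℕ → ℝ} {a : ℝ} {z : ℂ}
    (hb : MonotoneOn b (Set.Iio n)) (hb' : ∀ j < n, |b j| < 1 / 2) (ha : a ∈ Set.Ioo 0 (1 / 2))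
    (hz : z ∈ OmegaA n b a) :
    |(hFun n b a z).re - (hFun n b a z.re).re| ≤ 512 / 529 := by
  have hgeom := fun {j} (hj : j < n) => im_sq_le_and_abs_mul_im_sq_le_of_mem_OmegaA hb hb'
    ((abs_of_pos ha.1).trans_le ha.2.le) hz hj
  set x := z.re
  set y := z.im
  have hseg : ∀ t ∈ uIcc 0 y, ∀ j < n,
      (x + t * I).im ^ 2 ≤ 9 / 32 * (((x + t * I).re - b j) ^ 2 + a ^ 2) := by
    intro t ht j hj
    have : |t| ≤ |y| := by simpa using abs_sub_left_of_mem_uIcc ht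
    simpa using (sq_le_sq.mpr this).trans (hgeom hj).1
  have hderiv : ∀ t ∈ uIcc 0 y, HasDerivAt (fun s : ℝ => (hFun n b a (x + s * I)).re)
      (hFunDeriv n b a (x + t * I) * I).re t := fun t ht =>
    (hasDerivAt_hFun_of_im_sq_le ha.1.ne' (by norm_num) (hseg t ht)).re_comp_vertical
  have hbound : ∀ t ∈ uIcc 0 y, ‖(hFunDeriv n b a (x + t * I) * I).re‖ ≤
      (∑ j ∈ Finset.range n, (1 / 2) ^ j *
        (2 * |x - b j| / ((1 - 9 / 32) ^ 2 * ((x - b j) ^ 2 + a ^ 2) ^ 2))) * |t| := by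
    intro t ht
    rw [Real.norm_eq_abs, mul_I_re, abs_neg]
    simpa using abs_im_hFunDeriv_le ha.1.ne' (by norm_num) (hseg t ht)
  have hmvt := norm_sub_le_of_norm_deriv_le_mul_abs hderiv hbound
  rw [Real.norm_eq_abs, show (x : ℂ) + y * I = z from re_add_im z] at hmvt
  simp only [ofReal_zero, zero_mul, add_zero] at hmvt
  exact hmvt.trans (sum_half_pow_mul_div_mul_sq_le (fun j _ => by have := ha.1; positivity)
    fun j hj => (hgeom hj).2)

theorem hasDerivAt_vertical_of_weierstrass {h : ℂ → ℂ} {U : Set ℂ} (hUo : IsOpen U)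
    {G₁ G₂ G₃ : ℂ → ℂ}
    (hG₁ : ∀ z ∈ U, HasDerivAt G₁ (1 / 2 * (exp (-I * h z) - exp (I * h z))) z)
    (hG₂ : ∀ z ∈ U, HasDerivAt G₂ (I / 2 * (exp (-I * h z) + exp (I * h z))) z)
    (hG₃ : ∀ z ∈ U, HasDerivAt G₃ 1 z)
    {F : ℂ → EuclideanSpace ℝ (Fin 3)} (hF : ∀ z ∈ U, F z = vec3 (G₁ z).re (G₂ z).re (G₃ z).re)
    {x t : ℝ} (hw : (x + t * I : ℂ) ∈ U) :
    HasDerivAt (fun s : ℝ => F (x + s * I))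
      (vec3 (Real.sin (h (x + t * I)).re * Real.cosh (h (x + t * I)).im)
        (-(Real.cos (h (x + t * I)).re * Real.cosh (h (x + t * I)).im)) 0) t := by
  have h₁ := (hG₁ _ hw).re_comp_vertical
  have h₂ := (hG₂ _ hw).re_comp_vertical
  have h₃ := (hG₃ _ hw).re_comp_vertical
  rw [half_mul_exp_sub_mul_I, sin_re] at h₁
  rw [I_div_two_mul_exp_add_mul_I, neg_re, cos_re] at h₂
  rw [one_mul, I_re] at h₃
  have hline : Continuous fun s : ℝ => (x + s * I : ℂ) := by fun_prop
  refine (hasDerivAt_vec3 h₁ h₂ h₃).congr_of_eventuallyEq ?_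
  filter_upwards [hline.continuousAt.preimage_mem_nhds (hUo.mem_nhds hw)] with s hs
  exact hF _ hs

theorem stmt11_general (n : ℕ) (b : ℕ → ℝ)
    (hb0 : -(1/2) < b 0) (hbn : b (n - 1) < 1/2)
    (hbmono : ∀ j, j + 1 < n → b j < b (j + 1))
    (a : ℝ) (ha : a ∈ Set.Ioo (0 : ℝ) (1/2))
    (U : Set ℂ) (hUo : IsOpen U) (hUΩ : OmegaA n b a ⊆ U)
    (G₁ G₂ G₃ : ℂ → ℂ)
    (hG₁ : ∀ z ∈ U, HasDerivAt G₁
      ((1/2) * (Complex.exp (-Complex.I * hFun n b a z)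
        - Complex.exp (Complex.I * hFun n b a z))) z)
    (hG₂ : ∀ z ∈ U, HasDerivAt G₂
      ((Complex.I/2) * (Complex.exp (-Complex.I * hFun n b a z)
        + Complex.exp (Complex.I * hFun n b a z))) z)
    (hG₃ : ∀ z ∈ U, HasDerivAt G₃ 1 z)
    (F : ℂ → EuclideanSpace ℝ (Fin 3))
    (hF : ∀ z ∈ U, F z = vec3 (G₁ z).re (G₂ z).re (G₃ z).re)
    : ∀ z ∈ OmegaA n b a, ∃ Dy D0 : EuclideanSpace ℝ (Fin 3),
      HasDerivAt (fun y : ℝ => F ((z.re : ℂ) + (y : ℂ) * Complex.I)) Dy z.im ∧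
      HasDerivAt (fun y : ℝ => F ((z.re : ℂ) + (y : ℂ) * Complex.I)) D0 0 ∧
      ⟪Dy, D0⟫ = Real.cosh ((hFun n b a z).im)
        * Real.cos ((hFun n b a z).re - (hFun n b a ((z.re : ℂ))).re) ∧
      ⟪Dy, D0⟫ > Real.cosh ((hFun n b a z).im) / 2 ∧
      Real.cosh ((hFun n b a z).im) / 2 > 0 := by
  intro z hz
  have hmono : MonotoneOn b (Set.Iio n) :=
    (strictMonoOn_Iic_of_lt_succ (n := n - 1) fun m hm => by
      simpa using hbmono m (by omega)).monotoneOn.mono fun j (hj : j < n) => by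
        simp only [Set.mem_Iic]; omega
  have hbabs : ∀ j < n, |b j| < 1 / 2 := fun j hj => abs_lt.mpr
    ⟨hb0.trans_le (hmono (by omega : 0 < n) hj (Nat.zero_le j)),
      (hmono hj (by omega : n - 1 < n) (by omega)).trans_lt hbn⟩
  have hvert := fun t => hasDerivAt_vertical_of_weierstrass (x := z.re) (t := t) hUo hG₁ hG₂ hG₃ hF
  have hDy := hvert z.im (by rw [re_add_im]; exact hUΩ hz)
  have hD0 := hvert 0 (by simpa using hUΩ (ofReal_re_mem_OmegaA hz))
  simp only [re_add_im, ofReal_zero, zero_mul, add_zero, hFun_ofReal_im, Real.cosh_zero,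
    mul_one] at hDy hD0
  have hcos := Real.one_half_lt_cos_of_abs_lt_one
    ((abs_re_hFun_sub_re_hFun_ofReal_re_le hmono hbabs ha hz).trans_lt (by norm_num))
  have hcosh := Real.cosh_pos (hFun n b a z).im
  refine ⟨_, _, hDy, hD0, ?_, ?_, by positivity⟩
  · rw [inner_vec3, Real.cos_sub]
    ring
  · rw [inner_vec3]
    nlinarith [Real.cos_sub (hFun n b a z).re (hFun n b a z.re).re]

/-- For `(x,y) ∈ Ω_a`, writing `γ_{x,a}(y) = F_a(x,y)`, the `y`-partials
satisfy `⟨γ'_{x,a}(y), γ'_{x,a}(0)⟩ = cosh(v_a(x,y)) cos(u_a(x,y) - u_a(x,0))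
> cosh(v_a(x,y))/2 > 0`. Here `F_a` is the Weierstrass immersion encoded via primitives
`G₁, G₂, G₃` on an open set `U ⊇ Ω_a`. -/
theorem stmt11 (n : ℕ) (hn : 1 ≤ n) (b : ℕ → ℝ)
    (hb0 : -(1/2) < b 0) (hbn : b (n - 1) < 1/2)
    (hbmono : ∀ j, j + 1 < n → b j < b (j + 1))
    (a : ℝ) (ha : a ∈ Set.Ioo (0 : ℝ) (1/2))
    (U : Set ℂ) (hUo : IsOpen U) (hUΩ : OmegaA n b a ⊆ U)
    (G₁ G₂ G₃ : ℂ → ℂ)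
    (hG₁ : ∀ z ∈ U, HasDerivAt G₁
      ((1/2) * (Complex.exp (-Complex.I * hFun n b a z)
        - Complex.exp (Complex.I * hFun n b a z))) z)
    (hG₂ : ∀ z ∈ U, HasDerivAt G₂
      ((Complex.I/2) * (Complex.exp (-Complex.I * hFun n b a z)
        + Complex.exp (Complex.I * hFun n b a z))) z)
    (hG₃ : ∀ z ∈ U, HasDerivAt G₃ 1 z)
    (hG₁0 : G₁ 0 = 0) (hG₂0 : G₂ 0 = 0) (hG₃0 : G₃ 0 = 0)
    (F : ℂ → EuclideanSpace ℝ (Fin 3))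
    (hF : ∀ z ∈ U, F z = vec3 (G₁ z).re (G₂ z).re (G₃ z).re)
    : ∀ z ∈ OmegaA n b a, ∃ Dy D0 : EuclideanSpace ℝ (Fin 3),
      HasDerivAt (fun y : ℝ => F ((z.re : ℂ) + (y : ℂ) * Complex.I)) Dy z.im ∧
      HasDerivAt (fun y : ℝ => F ((z.re : ℂ) + (y : ℂ) * Complex.I)) D0 0 ∧
      ⟪Dy, D0⟫ = Real.cosh ((hFun n b a z).im)
        * Real.cos ((hFun n b a z).re - (hFun n b a ((z.re : ℂ))).re) ∧
      ⟪Dy, D0⟫ > Real.cosh ((hFun n b a z).im) / 2 ∧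
      Real.cosh ((hFun n b a z).im) / 2 > 0 :=
  stmt11_general n b hb0 hbn hbmono a ha U hUo hUΩ G₁ G₂ G₃ hG₁ hG₂ hG₃ F hF
end

section
/- For every a ∈ (0,1/2), every k ∈ {1,…,n}, and every (x,y) ∈ Ω_{a,k}, one has ∂_y v_a(x,y) ≥ (12/25) · Σ_{j=1}^{n} 2^{1−j}/((x−b_j)² + a²) > (3/8) · Σ_{j=1}^{n} 2^{1−j}/((x−b_j)² + a²), where v_a = Im h_a. -/
/-!
Since `h_a'(z) = ∑ⱼ 2⁻ʲ / ((z - bⱼ)² + a²)`, the Cauchy–Riemann equations give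
`∂_y v_a = Re h_a' = ∑ⱼ 2⁻ʲ Re (1 / Dⱼ)` with `Dⱼ = w² + a²`, `w = z - bⱼ`. Writing
`r = (Re w)² + a²` and `ε = (Im w)²`, one has `Re Dⱼ = r - ε` and `|Dⱼ|² = (r + ε)² - 4a²ε`, so
`Re (1 / Dⱼ) ≥ (12/25) / r` is the polynomial inequality `12 ((r + ε)² - 4a²ε) ≤ 25 r (r - ε)`.
On `Ω_{a,k}` the point `bₖ` is the nearest of the `bⱼ`, whence `4ε ≤ r^{3/2}` for every `j`; the
inequality is concave in `ε`, so it only has to be checked at `ε = 0` and `ε = r^{3/2} / 4`.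
-/

open Complex Real Set Finset Filter RealInnerProductSpace

/-- `0 < re (1 + w²)` keeps `w` off the branch cuts `±i [1, ∞)`. -/
lemma Complex.hasDerivAt_arctan_s13 {w : ℂ} (hw : 0 < (1 + w ^ 2).re) :
    HasDerivAt arctan (1 / (1 + w ^ 2)) w := by
  have hfac : 1 + w ^ 2 = (1 + w * I) * (1 - w * I) := by linear_combination w ^ 2 * I_sq
  have hne : 1 + w ^ 2 ≠ 0 := fun h => by simp [h] at hw
  have hm : 1 - w * I ≠ 0 := right_ne_zero_of_mul (hfac ▸ hne)
  have hslit : (1 + w * I) / (1 - w * I) ∈ slitPlane := by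
    have hpos : 0 < normSq (1 - w * I) := normSq_pos.mpr hm
    rw [mem_slitPlane_iff, div_re, div_im]
    simp only [add_re, add_im, sub_re, sub_im, mul_re, mul_im, I_re, I_im, one_re, one_im,
      mul_zero, mul_one, zero_sub, zero_add, add_zero]
    rcases eq_or_ne w.re 0 with h | h
    · left
      have : w.im ^ 2 < 1 := by simpa [sq, h] using hw
      rw [h, ← add_div]
      exact div_pos (by nlinarith) hpos
    · right
      rw [← sub_div]
      exact div_ne_zero (by ring_nf; simpa using h) hpos.ne'
  have hI : HasDerivAt (fun z : ℂ => z * I) I w := by simpa using (hasDerivAt_id w).mul_const I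
  refine ((((hI.const_add 1).fun_div (hI.const_sub 1) hm).clog hslit).const_mul
    (-I / 2)).congr_deriv ?_
  have hsum : (1 + w * I) + (1 - w * I) = 2 := by ring
  rw [hfac] at hne ⊢
  generalize 1 + w * I = p, 1 - w * I = m at hne hsum ⊢
  field_simp [left_ne_zero_of_mul hne, right_ne_zero_of_mul hne]
  linear_combination (-I ^ 2) * hsum - 2 * I_sq

lemma Complex.re_pos_of_re_inv_pos {w : ℂ} (h : 0 < (w⁻¹).re) : 0 < w.re := by
  rw [inv_re] at h
  exact ((div_pos_iff.mp h).resolve_right fun h' => (normSq_nonneg w).not_gt h'.2).1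

lemma HasDerivAt.hasDerivAt_im_vertical {f : ℂ → ℂ} {f' z : ℂ} (h : HasDerivAt f f' z) :
    HasDerivAt (fun y : ℝ => (f (z.re + y * I)).im) f'.re z.im := by
  have hline : HasDerivAt (fun y : ℝ => (z.re : ℂ) + y * I) I z.im := by
    simpa using ((hasDerivAt_id (z.im : ℂ)).mul_const I).const_add (z.re : ℂ) |>.comp_ofReal
  have hcomp := (re_add_im z ▸ h).comp z.im hline
  rw [show f'.re = imCLM (f' * I) by simp]
  exact imCLM.hasFDerivAt.comp_hasDerivAt z.im hcomp

lemma hasDerivAt_hFun_s13 {n : ℕ} {b : ℕ → ℝ} {a : ℝ} {z : ℂ} (ha : a ≠ 0)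
    (hz : ∀ j < n, 0 < ((z - b j) ^ 2 + a ^ 2).re) :
    HasDerivAt (hFun n b a)
      (∑ j ∈ range n, ((1 / 2 ^ j : ℝ) : ℂ) * ((z - b j) ^ 2 + a ^ 2)⁻¹) z := by
  refine HasDerivAt.fun_sum fun j hj => ?_
  have haC : (a : ℂ) ≠ 0 := ofReal_ne_zero.2 ha
  have hsq : 1 + ((z - b j) / a) ^ 2 = ((z - b j) ^ 2 + a ^ 2) / (a ^ 2 : ℝ) := by
    push_cast; field_simp; ring
  have hw : 0 < (1 + ((z - b j) / a) ^ 2).re := by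
    rw [hsq, div_ofReal_re]
    exact div_pos (hz j (mem_range.1 hj)) (by positivity)
  have hinner : HasDerivAt (fun z : ℂ => (z - b j) / a) (1 / a) z := by
    simpa using ((hasDerivAt_id z).sub_const (b j : ℂ)).div_const (a : ℂ)
  refine (((hasDerivAt_arctan_s13 hw).comp z hinner).const_mul _).congr_deriv ?_
  rw [hsq]
  push_cast
  field_simp

lemma twelve_mul_sq_sub_le {q c ε : ℝ} (hq : 0 ≤ q) (hc : 0 ≤ c) (hc' : c ≤ 1 / 4)
    (hqc : q ^ 2 ≤ 1 + c) (hε : 0 ≤ ε) (hεq : 4 * ε ≤ q ^ 3) :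
    12 * ((q ^ 2 + ε) ^ 2 - 4 * c * ε) ≤ 25 * q ^ 2 * (q ^ 2 - ε) := by
  -- `hend` is the claim at `ε = q³ / 4`, divided by `q³ / 4`; the claim is concave in `ε`.
  have hend : 0 ≤ 52 * q - 49 * q ^ 2 - 3 * q ^ 3 + 48 * c := by
    rcases le_total q 1 with h | h
    · nlinarith [mul_nonneg (mul_nonneg hq (sub_nonneg.2 h)) (by positivity : (0:ℝ) ≤ 52 + 3 * q)]
    · have : q ≤ 5 / 4 := by nlinarith
      nlinarith [mul_nonneg (sub_nonneg.2 h) (by nlinarith : (0:ℝ) ≤ 48 - 4 * q - 3 * q ^ 2)]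
  nlinarith [mul_nonneg (mul_nonneg hε (sub_nonneg.2 hεq)) (pow_nonneg hq 4),
    mul_nonneg hε (mul_nonneg (pow_nonneg hq 3) hend),
    mul_nonneg (sub_nonneg.2 hεq) (mul_nonneg hε hε)]

lemma rpow_three_fourths_sq {r : ℝ} (hr : 0 ≤ r) : (r ^ ((3 : ℝ) / 4)) ^ 2 = √r ^ 3 := by
  rw [Real.sqrt_eq_rpow, ← Real.rpow_natCast, ← Real.rpow_natCast, ← Real.rpow_mul hr,
    ← Real.rpow_mul hr]
  norm_num

lemma div_le_re_inv_sq_add_sq {w : ℂ} {a : ℝ} (ha : 0 < a) (ha' : a ≤ 1 / 2) (hw : w.re ^ 2 ≤ 1)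
    (hy : 2 * |w.im| ≤ (w.re ^ 2 + a ^ 2) ^ ((3 : ℝ) / 4)) :
    12 / 25 / (w.re ^ 2 + a ^ 2) ≤ ((w ^ 2 + a ^ 2)⁻¹).re := by
  set r := w.re ^ 2 + a ^ 2 with hr
  have hr0 : 0 < r := by positivity
  set q := √r
  have hq : q ^ 2 = r := Real.sq_sqrt hr0.le
  have hq0 : 0 < q := Real.sqrt_pos.2 hr0
  have hεq : 4 * w.im ^ 2 ≤ q ^ 3 := by
    rw [← rpow_three_fourths_sq hr0.le, ← sq_abs]
    nlinarith [abs_nonneg w.im]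
  have key := twelve_mul_sq_sub_le hq0.le (sq_nonneg a) (by nlinarith) (by nlinarith)
    (sq_nonneg w.im) hεq
  have hre : (w ^ 2 + a ^ 2).re = r - w.im ^ 2 := by simp [hr, sq]; ring
  have hnormSq : normSq (w ^ 2 + a ^ 2) = (r + w.im ^ 2) ^ 2 - 4 * a ^ 2 * w.im ^ 2 := by
    rw [normSq_apply]; simp [hr, sq]; ring
  have hεr : w.im ^ 2 < r := by
    have hq4 : q < 4 := by nlinarith
    nlinarith [mul_pos (pow_pos hq0 2) (sub_pos.2 hq4)]
  rw [inv_re, hre, hnormSq, div_le_div_iff₀ hr0 (by nlinarith), ← hq]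
  linarith

section OmegaJ

variable {n : ℕ} {b : ℕ → ℝ} {a : ℝ} {k : ℕ} {z : ℂ}

lemma sq_re_sub_le_one_of_mem_OmegaJ (hb0 : -(1 / 2) < b 0) (hbn : b (n - 1) < 1 / 2)
    (hb : MonotoneOn b (Set.Iic (n - 1))) (hk : k < n) (hz : z ∈ OmegaJ n b a k) {j : ℕ}
    (hj : j < n) : (z.re - b j) ^ 2 ≤ 1 := by
  have hmem {i : ℕ} (hi : i < n) : i ∈ Set.Iic (n - 1) := Nat.le_sub_one_of_lt hi
  have hb_mem {i : ℕ} (hi : i < n) : b i ∈ Icc (b 0) (b (n - 1)) :=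
    ⟨hb (hmem (by omega)) (hmem hi) (Nat.zero_le i), hb (hmem hi) (hmem (by omega)) (by omega)⟩
  have hleft : -(1 / 2) ≤ z.re := by
    refine le_trans ?_ hz.1
    unfold leftEnd
    split_ifs
    · rfl
    · linarith [(hb_mem (i := k - 1) (by omega)).1, (hb_mem hk).1]
  have hright : z.re ≤ 1 / 2 := by
    refine hz.2.1.trans ?_
    unfold rightEnd
    split_ifs
    · rfl
    · linarith [(hb_mem (i := k + 1) (by omega)).2, (hb_mem hk).2]
  rw [sq_le_one_iff_abs_le_one, abs_le]
  constructor <;> linarith [(hb_mem hj).1, (hb_mem hj).2]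

lemma sq_re_sub_le_of_mem_OmegaJ (hb : MonotoneOn b (Set.Iic (n - 1))) (hk : k < n)
    (hz : z ∈ OmegaJ n b a k) {j : ℕ} (hj : j < n) : (z.re - b k) ^ 2 ≤ (z.re - b j) ^ 2 := by
  have hmono {i l : ℕ} (hil : i ≤ l) (hl : l < n) : b i ≤ b l :=
    hb (Nat.le_sub_one_of_lt (by omega)) (Nat.le_sub_one_of_lt hl) hil
  rcases lt_trichotomy j k with hjk | rfl | hkj
  · have hleft := hz.1
    rw [leftEnd, if_neg (by omega)] at hleft
    nlinarith [hmono (Nat.le_sub_one_of_lt hjk) (by omega), hmono (Nat.sub_le k 1) hk]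
  · rfl
  · have hright := hz.2.1
    rw [rightEnd, if_neg (by omega)] at hright
    nlinarith [hmono hkj hj, hmono (Nat.le_succ k) (by omega)]

lemma two_mul_abs_im_le_of_mem_OmegaJ (hb : MonotoneOn b (Set.Iic (n - 1))) (hk : k < n)
    (hz : z ∈ OmegaJ n b a k) {j : ℕ} (hj : j < n) :
    2 * |z.im| ≤ ((z.re - b j) ^ 2 + a ^ 2) ^ ((3 : ℝ) / 4) := by
  have := Real.rpow_le_rpow (by positivity)
    (add_le_add_left (sq_re_sub_le_of_mem_OmegaJ hb hk hz hj) (a ^ 2))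
    (by norm_num : (0 : ℝ) ≤ 3 / 4)
  linarith [hz.2.2]

end OmegaJ

theorem stmt13_general (n : ℕ) (b : ℕ → ℝ)
    (hb0 : -(1/2) < b 0) (hbn : b (n - 1) < 1/2)
    (hbmono : ∀ j, j + 1 < n → b j < b (j + 1))
    (a : ℝ) (ha : a ∈ Set.Ioo (0 : ℝ) (1/2))
    (k : ℕ) (hk : k < n) (z : ℂ) (hz : z ∈ OmegaJ n b a k) :
    ∃ d : ℝ,
      HasDerivAt (fun y : ℝ => (hFun n b a ((z.re : ℂ) + (y : ℂ) * Complex.I)).im) d z.im ∧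
      d ≥ (12/25) * ∑ j ∈ Finset.range n, 1 / (2 : ℝ) ^ j / ((z.re - b j) ^ 2 + a ^ 2) ∧
      (12/25) * ∑ j ∈ Finset.range n, 1 / (2 : ℝ) ^ j / ((z.re - b j) ^ 2 + a ^ 2)
        > (3/8) * ∑ j ∈ Finset.range n, 1 / (2 : ℝ) ^ j / ((z.re - b j) ^ 2 + a ^ 2) := by
  obtain ⟨ha0, ha12⟩ := ha
  have hb : MonotoneOn b (Set.Iic (n - 1)) :=
    (strictMonoOn_Iic_of_lt_succ (n := n - 1) fun m hm => hbmono m (by omega)).monotoneOn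
  have hterm : ∀ j < n, 12 / 25 / ((z.re - b j) ^ 2 + a ^ 2) ≤ (((z - b j) ^ 2 + a ^ 2)⁻¹).re :=
    fun j hj => by
      simpa using div_le_re_inv_sq_add_sq (w := z - b j) ha0 ha12.le
        (by simpa using sq_re_sub_le_one_of_mem_OmegaJ hb0 hbn hb hk hz hj)
        (by simpa using two_mul_abs_im_le_of_mem_OmegaJ hb hk hz hj)
  have hderiv := (hasDerivAt_hFun_s13 ha0.ne' fun j hj => re_pos_of_re_inv_pos
    ((by positivity : (0 : ℝ) < _).trans_le (hterm j hj))).hasDerivAt_im_vertical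
  refine ⟨_, hderiv, ?_, ?_⟩
  · rw [ge_iff_le, re_sum, mul_sum]
    refine sum_le_sum fun j hj => ?_
    rw [re_ofReal_mul]
    calc 12 / 25 * (1 / 2 ^ j / ((z.re - b j) ^ 2 + a ^ 2))
        = 1 / 2 ^ j * (12 / 25 / ((z.re - b j) ^ 2 + a ^ 2)) := by ring
      _ ≤ _ := mul_le_mul_of_nonneg_left (hterm j (mem_range.1 hj)) (by positivity)
  · have : 0 < ∑ j ∈ range n, 1 / (2 : ℝ) ^ j / ((z.re - b j) ^ 2 + a ^ 2) :=
      sum_pos (fun j _ => by positivity) ⟨k, mem_range.2 hk⟩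
    linarith

/-- On `Ω_{a,k}`, the partial derivative `∂_y v_a(x,y)` (where `v_a = Im h_a`)
satisfies `∂_y v_a(x,y) ≥ (12/25) Σ_j 2^{1-j}/((x-b_j)²+a²) > (3/8) Σ_j 2^{1-j}/((x-b_j)²+a²)`. -/
theorem stmt13 (n : ℕ) (hn : 1 ≤ n) (b : ℕ → ℝ)
    (hb0 : -(1/2) < b 0) (hbn : b (n - 1) < 1/2)
    (hbmono : ∀ j, j + 1 < n → b j < b (j + 1))
    (a : ℝ) (ha : a ∈ Set.Ioo (0 : ℝ) (1/2))
    (k : ℕ) (hk : k < n) (z : ℂ) (hz : z ∈ OmegaJ n b a k) :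
    ∃ d : ℝ,
      HasDerivAt (fun y : ℝ => (hFun n b a ((z.re : ℂ) + (y : ℂ) * Complex.I)).im) d z.im ∧
      d ≥ (12/25) * ∑ j ∈ Finset.range n, 1 / (2 : ℝ) ^ j / ((z.re - b j) ^ 2 + a ^ 2) ∧
      (12/25) * ∑ j ∈ Finset.range n, 1 / (2 : ℝ) ^ j / ((z.re - b j) ^ 2 + a ^ 2)
        > (3/8) * ∑ j ∈ Finset.range n, 1 / (2 : ℝ) ^ j / ((z.re - b j) ^ 2 + a ^ 2) :=
  stmt13_general n b hb0 hbn hbmono a ha k hk z hz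
end
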